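/- arXiv:2604.04505 — 3 statements merged into one kernel-verified Lean document; each statement's English description precedes it below -/
import Mathlib

section
/- Let K be a field and A a finite dimensional K-algebra. If a torsion class 𝒯 in mod A is compact, then 𝒯 is polyhedral, i.e., the convex cone in ℝ^n generated by the dimension vectors of the modules in 𝒯 is a polyhedral (finitely generated) cone. -/
namespace TorsPaper

variable (A : Type) [Ring A]

/-- `N` is (isomorphic to) a factor module of `M`. -/
def IsQuotientOf (N M : ModuleCat.{0} A) : Prop :=
  ∃ f : M →ₗ[A] N, Function.Surjective f

/-- `L` is (isomorphic to) a submodule of `M`. -/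
def IsSubmoduleOf (L M : ModuleCat.{0} A) : Prop :=
  ∃ f : L →ₗ[A] M, Function.Injective f

/-- `M` is a nonzero module. -/
def Nonzero (M : ModuleCat.{0} A) : Prop := ∃ x : M, x ≠ 0

/-- A torsion class in `mod A`: a class of finitely generated modules, containing the zero
modules, closed under isomorphisms (which follows from `quot`), factor modules and
extensions. -/
structure IsTorsionClass (T : ModuleCat.{0} A → Prop) : Prop where
  fin : ∀ M, T M → Module.Finite A M
  zero : ∀ M : ModuleCat.{0} A, (∀ x : M, x = 0) → T M
  quot : ∀ M N : ModuleCat.{0} A, T M → Module.Finite A N → IsQuotientOf A N M → T N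
  ext : ∀ M : ModuleCat.{0} A, Module.Finite A M → ∀ N : Submodule A M,
    T (ModuleCat.of A N) → T (ModuleCat.of A (M ⧸ N)) → T M

/-- A torsion-free class in `mod A`. -/
structure IsTorsionFreeClass (F : ModuleCat.{0} A → Prop) : Prop where
  fin : ∀ M, F M → Module.Finite A M
  zero : ∀ M : ModuleCat.{0} A, (∀ x : M, x = 0) → F M
  sub : ∀ M N : ModuleCat.{0} A, F M → Module.Finite A N → IsSubmoduleOf A N M → F N
  ext : ∀ M : ModuleCat.{0} A, Module.Finite A M → ∀ N : Submodule A M,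
    F (ModuleCat.of A N) → F (ModuleCat.of A (M ⧸ N)) → F M

/-- The right Hom-perpendicular class `T^⊥` inside `mod A`. -/
def rightPerp (T : ModuleCat.{0} A → Prop) : ModuleCat.{0} A → Prop :=
  fun X => Module.Finite A X ∧ ∀ M : ModuleCat.{0} A, T M → ∀ f : M →ₗ[A] X, f = 0

/-- The smallest torsion class containing a class `S` of modules. -/
def torsClosure (S : ModuleCat.{0} A → Prop) : ModuleCat.{0} A → Prop :=
  fun X => ∀ T : ModuleCat.{0} A → Prop, IsTorsionClass A T → (∀ Y, S Y → T Y) → T X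

/-- The smallest torsion-free class containing a class `S` of modules. -/
def torfClosure (S : ModuleCat.{0} A → Prop) : ModuleCat.{0} A → Prop :=
  fun X => ∀ F : ModuleCat.{0} A → Prop, IsTorsionFreeClass A F → (∀ Y, S Y → F Y) → F X

/-- A torsion class is compact if it is the smallest torsion class containing a single
module `M`. -/
def IsCompactTors (T : ModuleCat.{0} A → Prop) : Prop :=
  ∃ M : ModuleCat.{0} A, Module.Finite A M ∧ T = torsClosure A (fun X => X = M)

/-- A torsion class is cocompact if `T^⊥` is the smallest torsion-free class containing a
single module `N`. -/
def IsCocompactTors (T : ModuleCat.{0} A → Prop) : Prop :=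
  ∃ N : ModuleCat.{0} A, Module.Finite A N ∧ rightPerp A T = torfClosure A (fun X => X = N)

/-- A torsion class is bicompact if it is both compact and cocompact. -/
def IsBicompactTors (T : ModuleCat.{0} A → Prop) : Prop :=
  IsCompactTors A T ∧ IsCocompactTors A T

/-- A class `C` of modules is functorially finite in `mod A` if every finitely generated
module has a left `C`-approximation and a right `C`-approximation. -/
def FunctoriallyFinite (C : ModuleCat.{0} A → Prop) : Prop :=
  (∀ M : ModuleCat.{0} A, Module.Finite A M →
    ∃ (X : ModuleCat.{0} A) (f : M →ₗ[A] X), C X ∧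
      ∀ Y : ModuleCat.{0} A, C Y → ∀ g : M →ₗ[A] Y, ∃ h : X →ₗ[A] Y, h.comp f = g) ∧
  (∀ M : ModuleCat.{0} A, Module.Finite A M →
    ∃ (X : ModuleCat.{0} A) (f : X →ₗ[A] M), C X ∧
      ∀ Y : ModuleCat.{0} A, C Y → ∀ g : Y →ₗ[A] M, ∃ h : Y →ₗ[A] X, f.comp h = g)

/-- A stability function: a real-valued function on `mod A` which is additive on short
exact sequences. -/
def IsStability (θ : ModuleCat.{0} A → ℝ) : Prop :=
  ∀ L M N : ModuleCat.{0} A, Module.Finite A L → Module.Finite A M → Module.Finite A N →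
    ∀ (f : L →ₗ[A] M) (g : M →ₗ[A] N), Function.Injective f → Function.Surjective g →
      LinearMap.range f = LinearMap.ker g → θ M = θ L + θ N

/-- The semistable torsion class `T_θ`. -/
def tTheta (θ : ModuleCat.{0} A → ℝ) : ModuleCat.{0} A → Prop :=
  fun M => Module.Finite A M ∧ ∀ N : ModuleCat.{0} A, Module.Finite A N →
    IsQuotientOf A N M → Nonzero A N → 0 < θ N

/-- The semistable torsion class `\bar T_θ`. -/
def tThetaBar (θ : ModuleCat.{0} A → ℝ) : ModuleCat.{0} A → Prop :=
  fun M => Module.Finite A M ∧ ∀ N : ModuleCat.{0} A, Module.Finite A N →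
    IsQuotientOf A N M → 0 ≤ θ N

/-- The semistable torsion-free class `F_θ`. -/
def fTheta (θ : ModuleCat.{0} A → ℝ) : ModuleCat.{0} A → Prop :=
  fun M => Module.Finite A M ∧ ∀ L : ModuleCat.{0} A, Module.Finite A L →
    IsSubmoduleOf A L M → Nonzero A L → θ L < 0

/-- The semistable torsion-free class `\bar F_θ`. -/
def fThetaBar (θ : ModuleCat.{0} A → ℝ) : ModuleCat.{0} A → Prop :=
  fun M => Module.Finite A M ∧ ∀ L : ModuleCat.{0} A, Module.Finite A L →
    IsSubmoduleOf A L M → θ L ≤ 0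

/-- An integer-valued function on `mod A` additive on short exact sequences; these are
exactly the group homomorphisms `K0(mod A) → ℤ`. -/
def IsAdditiveZ (φ : ModuleCat.{0} A → ℤ) : Prop :=
  ∀ L M N : ModuleCat.{0} A, Module.Finite A L → Module.Finite A M → Module.Finite A N →
    ∀ (f : L →ₗ[A] M) (g : M →ₗ[A] N), Function.Injective f → Function.Surjective g →
      LinearMap.range f = LinearMap.ker g → φ M = φ L + φ N

/-- `[X] = [Y]` in the Grothendieck group `K0(mod A)`: since `K0(mod A)` is free abelian
on the simple modules, this holds iff all additive `ℤ`-valued functions agree on `X`, `Y`. -/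
def SameK0Class (X Y : ModuleCat.{0} A) : Prop :=
  ∀ φ : ModuleCat.{0} A → ℤ, IsAdditiveZ A φ → φ X = φ Y

/-- Two classes of modules are numerically disjoint if they contain no nonzero `X`, `Y`
with `[X] = [Y] ≠ 0` in `K0(mod A)`. -/
def NumericallyDisjoint (C D : ModuleCat.{0} A → Prop) : Prop :=
  ¬ ∃ X Y : ModuleCat.{0} A, C X ∧ D Y ∧ Nonzero A X ∧ Nonzero A Y ∧ SameK0Class A X Y

/-- A brick: a finitely generated module whose endomorphism algebra is a division algebra,
i.e. `M` is nonzero and every nonzero endomorphism is invertible. -/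
def IsBrick (M : ModuleCat.{0} A) : Prop :=
  Module.Finite A M ∧ Nonzero A M ∧ ∀ f : M →ₗ[A] M, f ≠ 0 → Function.Bijective f

/-- A semibrick: a set of pairwise Hom-orthogonal bricks. -/
def IsSemibrick (S : Set (ModuleCat.{0} A)) : Prop :=
  (∀ M ∈ S, IsBrick A M) ∧
    ∀ M ∈ S, ∀ N ∈ S, M ≠ N → ∀ f : M →ₗ[A] N, f = 0




/-- Data identifying `K0(mod A)` with `ℤ^n`: a complete family `S` of pairwise
non-isomorphic simple modules together with the dimension-vector function `d`,
characterized by additivity on short exact sequences and `d (S i) = eᵢ`. -/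
structure DimData (n : ℕ) (S : Fin n → ModuleCat.{0} A)
    (d : ModuleCat.{0} A → (Fin n → ℤ)) : Prop where
  simple : ∀ i, IsSimpleModule A (S i)
  fin : ∀ i, Module.Finite A (S i)
  complete : ∀ M : ModuleCat.{0} A, Module.Finite A M → IsSimpleModule A M →
    ∃ i, Nonempty (M ≃ₗ[A] S i)
  distinct : ∀ i j, Nonempty ((S i) ≃ₗ[A] (S j)) → i = j
  additive : ∀ L M N : ModuleCat.{0} A, Module.Finite A L → Module.Finite A M →
    Module.Finite A N → ∀ (f : L →ₗ[A] M) (g : M →ₗ[A] N), Function.Injective f →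
      Function.Surjective g → LinearMap.range f = LinearMap.ker g → d M = d L + d N
  basis : ∀ i, d (S i) = Pi.single i 1

/-- The convex cone in `ℝ^n` generated by a set `S`. -/
def coneGen (n : ℕ) (S : Set (Fin n → ℝ)) : Set (Fin n → ℝ) :=
  { x | ∃ (m : ℕ) (c : Fin m → ℝ) (v : Fin m → (Fin n → ℝ)),
      (∀ i, 0 ≤ c i) ∧ (∀ i, v i ∈ S) ∧ x = ∑ i, c i • v i }

/-- The set of (real) dimension vectors of the modules in a class `C`. -/
def dimVecSet (n : ℕ) (d : ModuleCat.{0} A → (Fin n → ℤ)) (C : ModuleCat.{0} A → Prop) :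
    Set (Fin n → ℝ) :=
  { x | ∃ M : ModuleCat.{0} A, C M ∧ x = fun i => ((d M i : ℤ) : ℝ) }

/-- `cone C`: the convex cone generated by the dimension vectors of the modules in `C`. -/
def cone (n : ℕ) (d : ModuleCat.{0} A → (Fin n → ℤ)) (C : ModuleCat.{0} A → Prop) :
    Set (Fin n → ℝ) :=
  coneGen n (dimVecSet A n d C)

/-- A class `C` is polyhedral if `cone C` is a finitely generated (polyhedral) cone. -/
def IsPolyhedral (n : ℕ) (d : ModuleCat.{0} A → (Fin n → ℤ))
    (C : ModuleCat.{0} A → Prop) : Prop :=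
  ∃ (m : ℕ) (v : Fin m → (Fin n → ℝ)), cone A n d C = coneGen n (Set.range v)




section Aux

variable {A}
variable {n : ℕ} {S : Fin n → ModuleCat.{0} A} {d : ModuleCat.{0} A → (Fin n → ℤ)}

lemma d_subsingleton (hd : DimData A n S d) (M : ModuleCat.{0} A)
    (h : ∀ x : M, x = 0) : d M = 0 := by
  haveI : Subsingleton M := ⟨fun a b => by rw [h a, h b]⟩
  haveI : Module.Finite A M := inferInstance
  have key := hd.additive M M M this this this LinearMap.id LinearMap.id
    (fun a b _ => by rw [h a, h b]) (fun x => ⟨x, rfl⟩)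
    (by ext x; simp [h x])
  have : d M + 0 = d M + d M := by simpa using key
  exact (add_left_cancel this).symm

lemma d_congr (hd : DimData A n S d) (X Y : ModuleCat.{0} A)
    (hX : Module.Finite A X) (hY : Module.Finite A Y) (e : X ≃ₗ[A] Y) : d X = d Y := by
  have h0 : d (ModuleCat.of A PUnit) = 0 :=
    d_subsingleton hd _ (fun x => Subsingleton.elim _ _)
  have key := hd.additive X Y (ModuleCat.of A PUnit) hX hY inferInstance
    e.toLinearMap 0 e.injective (fun x => ⟨0, Subsingleton.elim _ _⟩)
    (by rw [LinearMap.ker_zero]; exact LinearMap.range_eq_top.mpr e.surjective)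
  rw [h0, add_zero] at key
  exact key.symm

lemma d_sub_quot (hd : DimData A n S d) (M : Type) [AddCommGroup M] [Module A M]
    (hM : Module.Finite A M) (N : Submodule A M) (h1 : Module.Finite A N)
    (h2 : Module.Finite A (M ⧸ N)) :
    d (ModuleCat.of A M) = d (ModuleCat.of A N) + d (ModuleCat.of A (M ⧸ N)) :=
  hd.additive (ModuleCat.of A N) (ModuleCat.of A M) (ModuleCat.of A (M ⧸ N)) h1 hM h2
    N.subtype N.mkQ N.injective_subtype N.mkQ_surjective
    (by rw [Submodule.range_subtype, Submodule.ker_mkQ])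

lemma noeth_of_finite (K : Type) [Field K] [Algebra K A] [FiniteDimensional K A] (M : Type) [AddCommGroup M] [Module A M] [Module.Finite A M] :
    IsNoetherian A M := by
  letI : Module K M := Module.compHom M (algebraMap K A)
  haveI : IsScalarTower K A M :=
    ⟨fun k a m => by rw [Algebra.smul_def, mul_smul]; rfl⟩
  haveI : Module.Finite K M := Module.Finite.trans A M
  haveI : IsNoetherian K M := inferInstance
  exact isNoetherian_of_tower K this

lemma art_of_finite (K : Type) [Field K] [Algebra K A] [FiniteDimensional K A] (M : Type) [AddCommGroup M] [Module A M] [Module.Finite A M] :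
    IsArtinian A M := by
  letI : Module K M := Module.compHom M (algebraMap K A)
  haveI : IsScalarTower K A M :=
    ⟨fun k a m => by rw [Algebra.smul_def, mul_smul]; rfl⟩
  haveI : Module.Finite K M := Module.Finite.trans A M
  haveI : IsArtinian K M := inferInstance
  exact isArtinian_of_tower K this

lemma fin_submodule (K : Type) [Field K] [Algebra K A] [FiniteDimensional K A] (M : Type) [AddCommGroup M] [Module A M] [Module.Finite A M]
    (N : Submodule A M) : Module.Finite A N := by
  haveI := noeth_of_finite (A := A) K M
  exact Module.Finite.iff_fg.mpr (IsNoetherian.noetherian N)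

lemma d_nonneg (hd : DimData A n S d) (K : Type) [Field K] [Algebra K A]
    [FiniteDimensional K A] (M : ModuleCat.{0} A) (hM : Module.Finite A M) (i : Fin n) :
    0 ≤ d M i := by
  haveI := hM
  haveI : IsNoetherian A M := noeth_of_finite K M
  haveI : IsArtinian A M := art_of_finite K M
  have key : ∀ W : Submodule A M, ∀ i : Fin n, 0 ≤ d (ModuleCat.of A (M ⧸ W)) i := by
    intro W
    induction W using (IsNoetherian.wf (R := A) (M := M) inferInstance).induction with
    | _ W IH =>
      intro i
      by_cases htriv : ∀ x : M ⧸ W, x = 0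
      · rw [d_subsingleton hd _ htriv]
        exact le_refl 0
      · haveI : IsArtinian A (M ⧸ W) := inferInstance
        push_neg at htriv
        obtain ⟨x0, hx0⟩ := htriv
        obtain ⟨a, ha, -⟩ :=
          (eq_bot_or_exists_atom_le (⊤ : Submodule A (M ⧸ W))).resolve_left (by
            intro h
            exact hx0 (by simpa using (h ▸ Submodule.mem_top : x0 ∈ (⊥ : Submodule A (M ⧸ W)))))
        haveI : IsSimpleModule A a := isSimpleModule_iff_isAtom.mpr ha
        have hfa : Module.Finite A a := fin_submodule K (M ⧸ W) a
        obtain ⟨j, ⟨e⟩⟩ := hd.complete (ModuleCat.of A a) hfa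
          (isSimpleModule_iff_isAtom.mpr ha)
        have h1 : d (ModuleCat.of A a) = Pi.single j 1 := by
          rw [d_congr hd (ModuleCat.of A a) (S j) hfa (hd.fin j) e, hd.basis j]
        set W' := a.comap W.mkQ with hW'
        have hle : W ≤ W' := by
          intro x hx
          show W.mkQ x ∈ a
          have hz : W.mkQ x = 0 := (Submodule.Quotient.mk_eq_zero W).mpr hx
          rw [hz]; exact a.zero_mem
        have hlt : W < W' := lt_of_le_of_ne hle (by
          intro h
          obtain ⟨y, hy, hy0⟩ := (Submodule.ne_bot_iff a).mp ha.1
          obtain ⟨x, rfl⟩ := W.mkQ_surjective y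
          have hxW' : x ∈ W' := hy
          exact hy0 ((Submodule.Quotient.mk_eq_zero W).mpr (h ▸ hxW')))
        have hmap : Submodule.map W.mkQ W' = a := by
          rw [hW', Submodule.map_comap_eq, Submodule.range_mkQ, top_inf_eq]
        have e2 : (((M ⧸ W) ⧸ a)) ≃ₗ[A] (M ⧸ W') :=
          hmap ▸ (Submodule.quotientQuotientEquivQuotient W W' hle)
        have hsplit := d_sub_quot hd (M ⧸ W) inferInstance a
          hfa inferInstance
        have h3 : d (ModuleCat.of A ((M ⧸ W) ⧸ a)) = d (ModuleCat.of A (M ⧸ W')) :=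
          d_congr hd _ _ (inferInstanceAs (Module.Finite A ((M ⧸ W) ⧸ a)))
            (inferInstanceAs (Module.Finite A (M ⧸ W'))) e2
        rw [hsplit, h1, h3]
        have hs : (0:ℤ) ≤ (Pi.single j 1 : Fin n → ℤ) i := by
          rcases eq_or_ne i j with rfl | h
          · simp
          · simp [Pi.single_eq_of_ne h]
        simp only [Pi.add_apply]
        exact add_nonneg hs (IH W' hlt i)
  have e0 : ((M : Type) ⧸ (⊥ : Submodule A M)) ≃ₗ[A] M := Submodule.quotEquivOfEqBot ⊥ rfl
  have hfin : Module.Finite A (ModuleCat.of A ((M : Type) ⧸ (⊥ : Submodule A M))) :=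
    inferInstanceAs (Module.Finite A ((M : Type) ⧸ (⊥ : Submodule A M)))
  have := key ⊥ i
  rwa [d_congr hd (ModuleCat.of A ((M : Type) ⧸ (⊥ : Submodule A M))) M hfin hM e0] at this

lemma d_quot_bound (hd : DimData A n S d) (K : Type) [Field K] [Algebra K A]
    [FiniteDimensional K A] (M₀ N : ModuleCat.{0} A) (hM : Module.Finite A M₀)
    (hN : Module.Finite A N) (hq : IsQuotientOf A N M₀) (i : Fin n) :
    0 ≤ d N i ∧ d N i ≤ d M₀ i := by
  obtain ⟨g, hg⟩ := hq
  have finker : Module.Finite A (LinearMap.ker g) := fin_submodule K M₀ (LinearMap.ker g)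
  have hsum : d M₀ = d (ModuleCat.of A (LinearMap.ker g)) + d N :=
    hd.additive (ModuleCat.of A (LinearMap.ker g)) M₀ N finker hM hN
      (LinearMap.ker g).subtype g (LinearMap.ker g).injective_subtype hg
      (Submodule.range_subtype _)
  have h1 := d_nonneg hd K (ModuleCat.of A (LinearMap.ker g)) finker i
  have h2 := d_nonneg hd K N hN i
  have h3 := congrFun hsum i
  simp only [Pi.add_apply] at h3
  exact ⟨h2, by linarith⟩

lemma mem_coneGen_of_mem {m : ℕ} {S : Set (Fin m → ℝ)} {x : Fin m → ℝ} (hx : x ∈ S) :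
    x ∈ coneGen m S :=
  ⟨1, fun _ => 1, fun _ => x, fun _ => zero_le_one, fun _ => hx, by simp⟩

lemma coneGen_mono {m : ℕ} {S T : Set (Fin m → ℝ)} (h : S ⊆ T) :
    coneGen m S ⊆ coneGen m T := by
  rintro x ⟨k, c, v, h1, h2, h3⟩
  exact ⟨k, c, v, h1, fun i => h (h2 i), h3⟩

lemma zero_mem_coneGen {m : ℕ} {S : Set (Fin m → ℝ)} : (0 : Fin m → ℝ) ∈ coneGen m S :=
  ⟨0, Fin.elim0, Fin.elim0, fun i => i.elim0, fun i => i.elim0, by simp⟩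

lemma add_mem_coneGen {m : ℕ} {S : Set (Fin m → ℝ)} {x y : Fin m → ℝ}
    (hx : x ∈ coneGen m S) (hy : y ∈ coneGen m S) : x + y ∈ coneGen m S := by
  obtain ⟨k1, c1, v1, h11, h12, h13⟩ := hx
  obtain ⟨k2, c2, v2, h21, h22, h23⟩ := hy
  refine ⟨k1 + k2, Fin.append c1 c2, Fin.append v1 v2, ?_, ?_, ?_⟩
  · intro i
    refine Fin.addCases (fun j => ?_) (fun j => ?_) i
    · rw [Fin.append_left]; exact h11 j
    · rw [Fin.append_right]; exact h21 j
  · intro i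
    refine Fin.addCases (fun j => ?_) (fun j => ?_) i
    · rw [Fin.append_left]; exact h12 j
    · rw [Fin.append_right]; exact h22 j
  · rw [h13, h23, Fin.sum_univ_add]
    congr 1
    · exact Finset.sum_congr rfl (fun j _ => by rw [Fin.append_left, Fin.append_left])
    · exact Finset.sum_congr rfl (fun j _ => by rw [Fin.append_right, Fin.append_right])

lemma smul_mem_coneGen {m : ℕ} {S : Set (Fin m → ℝ)} {x : Fin m → ℝ} {c : ℝ}
    (hc : 0 ≤ c) (hx : x ∈ coneGen m S) : c • x ∈ coneGen m S := by
  obtain ⟨k, c1, v, h1, h2, h3⟩ := hx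
  refine ⟨k, fun i => c * c1 i, v, fun i => mul_nonneg hc (h1 i), h2, ?_⟩
  rw [h3, Finset.smul_sum]
  exact Finset.sum_congr rfl (fun j _ => by rw [smul_smul])

lemma coneGen_le {m : ℕ} {S T : Set (Fin m → ℝ)} (h : S ⊆ coneGen m T) :
    coneGen m S ⊆ coneGen m T := by
  rintro x ⟨k, c, v, h1, h2, h3⟩
  rw [h3]
  exact Finset.sum_induction _ (· ∈ coneGen m T)
    (fun a b ha hb => add_mem_coneGen ha hb) zero_mem_coneGen
    (fun i _ => smul_mem_coneGen (h1 i) (h (h2 i)))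

end Aux

/-- Every compact torsion class is polyhedral: the convex cone in `ℝ^n`
generated by the dimension vectors of its modules is a finitely generated cone. -/
theorem stmt6 (K : Type) [Field K] [Algebra K A] [FiniteDimensional K A]
    (n : ℕ) (S : Fin n → ModuleCat.{0} A) (d : ModuleCat.{0} A → (Fin n → ℤ))
    (hd : DimData A n S d)
    (T : ModuleCat.{0} A → Prop) (hT : IsTorsionClass A T)
    (hc : IsCompactTors A T) :
    IsPolyhedral A n d T := by
  obtain ⟨M₀, hM₀, hTeq⟩ := hc
  set V : Set (Fin n → ℤ) :=
    {x | ∃ N : ModuleCat.{0} A, Module.Finite A N ∧ IsQuotientOf A N M₀ ∧ x = d N} with hV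
  have hVfin : V.Finite := by
    refine (Set.finite_Icc (0 : Fin n → ℤ) (d M₀)).subset ?_
    rintro x ⟨N, hNfin, hNq, rfl⟩
    constructor
    · intro i; exact (d_quot_bound hd K M₀ N hM₀ hNfin hNq i).1
    · intro i; exact (d_quot_bound hd K M₀ N hM₀ hNfin hNq i).2
  obtain ⟨m, w, hw⟩ := hVfin.fin_embedding
  refine ⟨m, fun j i => (((w j : Fin n → ℤ) i : ℤ) : ℝ), ?_⟩
  set v : Fin m → (Fin n → ℝ) := fun j i => (((w j : Fin n → ℤ) i : ℤ) : ℝ) with hv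
  -- the master torsion class
  set P : ModuleCat.{0} A → Prop := fun Y => Module.Finite A Y ∧
    ∀ N : ModuleCat.{0} A, Module.Finite A N → IsQuotientOf A N Y →
      (fun i => ((d N i : ℤ) : ℝ)) ∈ coneGen n (Set.range v) with hP
  have hPM₀ : P M₀ := by
    refine ⟨hM₀, fun N hN hq => mem_coneGen_of_mem ?_⟩
    have hmem : d N ∈ V := ⟨N, hN, hq, rfl⟩
    have : d N ∈ Set.range (⇑w) := hw.symm ▸ hmem
    obtain ⟨j, hj⟩ := this
    exact ⟨j, by funext i; exact congrArg Int.cast (congrFun hj i)⟩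
  have hPtors : IsTorsionClass A P := by
    constructor
    · exact fun Y hY => hY.1
    · intro Y hY
      haveI : Subsingleton (Y : Type) := ⟨fun a b => by rw [hY a, hY b]⟩
      refine ⟨inferInstance, fun N hN hq => ?_⟩
      obtain ⟨g, hg⟩ := hq
      have hzero : ∀ x : N, x = 0 := by
        intro x
        obtain ⟨y, rfl⟩ := hg x
        rw [show y = 0 from hY y, map_zero]
      have : (fun i => ((d N i : ℤ) : ℝ)) = 0 := by
        funext i
        rw [d_subsingleton hd N hzero]
        simp
      rw [this]
      exact zero_mem_coneGen
    · rintro Y N hY hNfin ⟨g, hg⟩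
      refine ⟨hNfin, fun N' hN' hq' => ?_⟩
      obtain ⟨g', hg'⟩ := hq'
      exact hY.2 N' hN' ⟨g'.comp g, hg'.comp hg⟩
    · rintro Y hYfin W hW1 hW2
      refine ⟨hYfin, ?_⟩
      rintro N hNfin ⟨g, hg⟩
      haveI := hYfin; haveI := hNfin
      set L : Submodule A (N : Type) := Submodule.map g W with hL
      haveI hfinW := hW1.1
      have hq1 : IsQuotientOf A (ModuleCat.of A L) (ModuleCat.of A W) := by
        refine ⟨LinearMap.codRestrict L (g.domRestrict W)
          (fun x => Submodule.mem_map_of_mem x.2), ?_⟩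
        rintro ⟨y, hy⟩
        obtain ⟨x, hx, rfl⟩ := hy
        exact ⟨⟨x, hx⟩, rfl⟩
      have hfinL : Module.Finite A (L : Type) := by
        obtain ⟨f, hf⟩ := hq1
        exact Module.Finite.of_surjective f hf
      have hmem1 := hW1.2 (ModuleCat.of A L) hfinL hq1
      -- N ⧸ L is a quotient of Y ⧸ W
      have hker : W ≤ LinearMap.ker (L.mkQ.comp g) := by
        intro x hx
        have : g x ∈ L := Submodule.mem_map_of_mem hx
        simpa [LinearMap.mem_ker, Submodule.Quotient.mk_eq_zero] using this
      have hq2 : IsQuotientOf A (ModuleCat.of A ((N : Type) ⧸ L))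
          (ModuleCat.of A ((Y : Type) ⧸ W)) := by
        refine ⟨Submodule.liftQ W (L.mkQ.comp g) hker, ?_⟩
        intro z
        obtain ⟨y0, rfl⟩ := L.mkQ_surjective z
        obtain ⟨x, rfl⟩ := hg y0
        exact ⟨W.mkQ x, rfl⟩
      have hfinNL : Module.Finite A ((N : Type) ⧸ L) := inferInstance
      have hmem2 := hW2.2 (ModuleCat.of A ((N : Type) ⧸ L)) hfinNL hq2
      have hsplit := d_sub_quot hd (N : Type) hNfin L hfinL hfinNL
      have hco : d N = d (ModuleCat.of A (N : Type)) :=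
        d_congr hd N (ModuleCat.of A (N : Type)) hNfin hNfin (LinearEquiv.refl A (N : Type))
      have hvec : (fun i => ((d N i : ℤ) : ℝ)) =
          (fun i => ((d (ModuleCat.of A (L : Type)) i : ℤ) : ℝ)) +
          (fun i => ((d (ModuleCat.of A ((N : Type) ⧸ L)) i : ℤ) : ℝ)) := by
        funext i
        have h := congrFun (hco.trans hsplit) i
        simp only [Pi.add_apply] at h ⊢
        rw [h]
        push_cast
        ring
      rw [hvec]
      exact add_mem_coneGen hmem1 hmem2
  show cone A n d T = coneGen n (Set.range v)
  apply Set.Subset.antisymm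
  · show coneGen n (dimVecSet A n d T) ⊆ coneGen n (Set.range v)
    apply coneGen_le
    rintro x ⟨X, hX, rfl⟩
    rw [hTeq] at hX
    have hPX : P X := hX P hPtors (fun Y hY => by rw [hY]; exact hPM₀)
    exact hPX.2 X hPX.1 ⟨LinearMap.id, fun y => ⟨y, rfl⟩⟩
  · show coneGen n (Set.range v) ⊆ coneGen n (dimVecSet A n d T)
    apply coneGen_le
    rintro x ⟨j, rfl⟩
    have hTM₀ : T M₀ := by
      rw [hTeq]; intro T' hT' hcont; exact hcont M₀ rfl
    have hmem : (w j : Fin n → ℤ) ∈ V := hw ▸ ⟨j, rfl⟩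
    obtain ⟨N, hNfin, hNq, hNd⟩ := hmem
    refine mem_coneGen_of_mem ⟨N, hT.quot M₀ N hTM₀ hNfin hNq, ?_⟩
    funext i
    exact congrArg Int.cast (congrFun hNd i)

end TorsPaper
end

section
/- Let K be a field, A a finite dimensional K-algebra, 𝒯 a torsion class and ℱ a torsion-free class in mod A. Then the following conditions are equivalent: (a) 𝒯 and ℱ are numerically disjoint; (b) cone 𝒯 ∩ cone ℱ = {0}; (c) the cone C = {x − y : x ∈ cone 𝒯, y ∈ cone ℱ} ⊆ ℝ^n is strongly convex, i.e., C ∩ (−C) = {0}. -/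
/-!
Dimension vectors of finitely generated modules are nonnegative, and nonzero on nonzero modules:
peel off a simple submodule and induct on the length. Hence both cones lie in the nonnegative
orthant, which gives (b) ⇔ (c) and (b) ⇒ (a).

For (a) ⇒ (b), a nonzero common point of `cone 𝒯` and `cone ℱ` is a relation
`∑ cᵢ dim Mᵢ = ∑ c'ⱼ dim Nⱼ` with `Mᵢ ∈ 𝒯`, `Nⱼ ∈ ℱ` and real `cᵢ, c'ⱼ ≥ 0`. A `ℚ`-linear map
`ℝ → ℚ` that is positive on the positive coefficients turns it into a rational relation with the
same support, and clearing denominators into a relation with natural coefficients `kᵢ, k'ⱼ`. The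
direct sums `X = ⊕ Mᵢ^kᵢ ∈ 𝒯` and `Y = ⊕ Nⱼ^k'ⱼ ∈ ℱ` then satisfy `dim X = dim Y ≠ 0`.
-/

namespace TorsPaper

variable (A : Type) [Ring A]

/-- The cone `C = cone 𝒯 - cone ℱ` of differences. -/
def diffCone (n : ℕ) (d : ModuleCat.{0} A → (Fin n → ℤ))
    (T F : ModuleCat.{0} A → Prop) : Set (Fin n → ℝ) :=
  { z | ∃ x ∈ cone A n d T, ∃ y ∈ cone A n d F, z = x - y }

variable {A}

theorem exists_ratLinearMap_pos {ι : Type*} [Finite ι] (a : ι → ℝ) :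
    ∃ φ : ℝ →ₗ[ℚ] ℚ, ∀ t, 0 < a t → 0 < φ (a t) := by
  let B := Module.Basis.ofVectorSpace ℚ ℝ
  let L : (Module.Basis.ofVectorSpaceIndex ℚ ℝ → ℝ) → ι → ℝ :=
    fun q t => (B.repr (a t)).sum fun β c => c * q β
  have hL : Continuous L := continuous_pi fun t =>
    continuous_finsetSum _ fun β _ => (continuous_apply β).const_mul _
  have hLB : L B = a := funext fun t => by
    simpa [L, Finsupp.linearCombination_apply, Rat.smul_def] using B.linearCombination_repr (a t)
  -- `φ := ∑ β, q β • B.coord β` has `φ (a t) = L q t`, and `L B = a`; positivity on the `a t`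
  -- is an open condition on `q`, so it survives approximating `B` by a rational `q`
  have hU : IsOpen (⋂ t ∈ {t | 0 < a t}, {y : ι → ℝ | 0 < y t}) :=
    (Set.toFinite _).isOpen_biInter fun t _ => isOpen_lt continuous_const (continuous_apply t)
  obtain ⟨q, hq⟩ := (DenseRange.piMap fun _ => Rat.denseRange_cast).exists_mem_open
    (hU.preimage hL) ⟨B, by simp [hLB]⟩
  refine ⟨Finsupp.linearCombination ℚ q ∘ₗ B.repr.toLinearMap, fun t ht => ?_⟩
  have hφ : ((Finsupp.linearCombination ℚ q ∘ₗ B.repr.toLinearMap) (a t) : ℝ) =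
      L (Pi.map (fun _ => Rat.cast) q) t := by
    simp [L, Finsupp.linearCombination_apply, Finsupp.sum]
  have hpos : 0 < L (Pi.map (fun _ => Rat.cast) q) t := by simpa using Set.mem_iInter₂.1 hq t ht
  exact_mod_cast hφ ▸ hpos

theorem exists_nat_mul_eq_nat {ι : Type*} [Fintype ι] (b : ι → ℚ) (hb : ∀ t, 0 ≤ b t) :
    ∃ N : ℕ, 0 < N ∧ ∃ k : ι → ℕ, ∀ t, (k t : ℚ) = N * b t := by
  classical
  refine ⟨∏ t, (b t).den, Finset.prod_pos fun t _ => (b t).pos,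
    fun t => (b t).num.toNat * ∏ s ∈ Finset.univ.erase t, (b s).den, fun t => ?_⟩
  have hnum : ((b t).num.toNat : ℚ) = (b t).num := by
    exact_mod_cast Int.toNat_of_nonneg (Rat.num_nonneg.2 (hb t))
  rw [← Finset.mul_prod_erase _ _ (Finset.mem_univ t)]
  push_cast
  rw [hnum, ← Rat.den_mul_eq_num]
  ring

theorem exists_nat_sum_eq_of_real_sum_eq {ι κ σ : Type*} [Fintype ι] [Fintype κ]
    (u : ι → σ → ℤ) (w : κ → σ → ℤ) (c : ι → ℝ) (c' : κ → ℝ)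
    (hc : ∀ i, 0 ≤ c i) (hc' : ∀ j, 0 ≤ c' j)
    (h : ∑ i, c i • (fun l => (u i l : ℝ)) = ∑ j, c' j • (fun l => (w j l : ℝ))) :
    ∃ (k : ι → ℕ) (k' : κ → ℕ), ∑ i, k i • u i = ∑ j, k' j • w j ∧ ∀ i, 0 < c i → 0 < k i := by
  obtain ⟨φ, hφ⟩ := exists_ratLinearMap_pos (Sum.elim c c')
  have hφ_nonneg : ∀ t, 0 ≤ φ (Sum.elim c c' t) := fun t => by
    rcases (show 0 ≤ Sum.elim c c' t from t.rec hc hc').eq_or_lt with h0 | hpos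
    · simp [← h0]
    · exact (hφ t hpos).le
  obtain ⟨N, hN, k, hk⟩ := exists_nat_mul_eq_nat _ hφ_nonneg
  have hφ_mul : ∀ (x : ℝ) (z : ℤ), φ (x * z) = z * φ x := fun x z => by
    rw [mul_comm, ← zsmul_eq_mul, map_zsmul, zsmul_eq_mul]
  refine ⟨k ∘ Sum.inl, k ∘ Sum.inr, funext fun l => ?_, fun i hi => ?_⟩
  · have hl := congrArg (fun v => φ (v l)) h
    simp only [Finset.sum_apply, Pi.smul_apply, smul_eq_mul, map_sum, hφ_mul] at hl
    have hq : ∑ i, (k (Sum.inl i) : ℚ) * u i l = ∑ j, (k (Sum.inr j) : ℚ) * w j l := by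
      have e : ∀ (x : ℝ) (z : ℤ), (N : ℚ) * φ x * z = N * (z * φ x) := fun _ _ => by ring
      simp only [hk, Sum.elim_inl, Sum.elim_inr, e, ← Finset.mul_sum, hl]
    simpa [Finset.sum_apply] using (by exact_mod_cast hq : ∑ i, (k (Sum.inl i) : ℤ) * u i l = _)
  · have : (0 : ℚ) < k (Sum.inl i) := by
      rw [hk]
      exact mul_pos (by exact_mod_cast hN) (hφ (Sum.inl i) hi)
    exact_mod_cast this

namespace DimData

variable {n : ℕ} {S : Fin n → ModuleCat.{0} A} {d : ModuleCat.{0} A → Fin n → ℤ}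
  (hd : DimData A n S d)
include hd

theorem dim_eq_zero (M : ModuleCat.{0} A) [Subsingleton M] : d M = 0 := by
  have h := hd.additive M M M inferInstance inferInstance inferInstance LinearMap.id LinearMap.id
    Function.injective_id Function.surjective_id (Subsingleton.elim _ _)
  simpa using h

theorem dim_eq_of_linearEquiv {M N : ModuleCat.{0} A} [Module.Finite A M] (e : M ≃ₗ[A] N) :
    d M = d N := by
  have : Module.Finite A N := Module.Finite.equiv e
  rw [hd.additive M N (ModuleCat.of A PUnit) inferInstance inferInstance inferInstance e 0
    e.injective (fun _ => ⟨0, Subsingleton.elim _ _⟩) (by simp),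
    hd.dim_eq_zero (ModuleCat.of A PUnit), add_zero]

theorem dim_eq_add_quotient [IsNoetherianRing A] (M : ModuleCat.{0} A) [Module.Finite A M]
    (L : Submodule A M) : d M = d (ModuleCat.of A L) + d (ModuleCat.of A (M ⧸ L)) :=
  hd.additive (ModuleCat.of A L) M (ModuleCat.of A (M ⧸ L)) inferInstance inferInstance
    inferInstance L.subtype L.mkQ L.injective_subtype L.mkQ_surjective
    (by rw [Submodule.range_subtype, Submodule.ker_mkQ])

theorem dim_prod (M N : ModuleCat.{0} A) [Module.Finite A M] [Module.Finite A N] :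
    d (ModuleCat.of A (M × N)) = d M + d N :=
  hd.additive M (ModuleCat.of A (M × N)) N inferInstance inferInstance inferInstance
    (LinearMap.inl A M N) (LinearMap.snd A M N) LinearMap.inl_injective Prod.snd_surjective
    (LinearMap.range_inl A M N)

theorem exists_dim_eq_single_add [IsArtinianRing A] [IsNoetherianRing A] (M : ModuleCat.{0} A)
    [Module.Finite A M] [Nontrivial M] : ∃ (i : Fin n) (L : Submodule A M),
      IsSimpleModule A L ∧ d M = Pi.single i 1 + d (ModuleCat.of A (M ⧸ L)) := by
  have : IsAtomic (Submodule A M) := isAtomic_of_orderBot_wellFounded_lt wellFounded_lt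
  obtain ⟨L, hL⟩ := IsAtomic.exists_atom (Submodule A M)
  have : IsSimpleModule A L := isSimpleModule_iff_isAtom.2 hL
  obtain ⟨i, ⟨e⟩⟩ := hd.complete (ModuleCat.of A L) inferInstance this
  refine ⟨i, L, this, ?_⟩
  rw [hd.dim_eq_add_quotient M L, hd.dim_eq_of_linearEquiv e, hd.basis]

theorem dim_nonneg [IsArtinianRing A] [IsNoetherianRing A] (M : ModuleCat.{0} A)
    [Module.Finite A M] : 0 ≤ d M := by
  obtain ⟨k, hk⟩ := ENat.ne_top_iff_exists.1 (Module.length_ne_top (R := A) (M := M))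
  induction k generalizing M with
  | zero =>
    have : Subsingleton M := (Module.length_eq_zero_iff (R := A)).1 (by exact_mod_cast hk.symm)
    rw [hd.dim_eq_zero M]
  | succ k ih =>
    have : Nontrivial M :=
      (Module.length_pos_iff (R := A)).1 (by rw [← hk]; exact_mod_cast k.succ_pos)
    obtain ⟨i, L, hL, hdM⟩ := hd.exists_dim_eq_single_add M
    have hlen : Module.length A M = 1 + Module.length A (M ⧸ L) := by
      rw [Module.length_eq_add_of_exact L.subtype L.mkQ L.injective_subtype L.mkQ_surjective
        (LinearMap.exact_subtype_mkQ L), Module.length_eq_one]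
    rw [hdM]
    refine add_nonneg (Pi.single_nonneg.2 zero_le_one) (ih (ModuleCat.of A (M ⧸ L)) ?_)
    rw [← hk, Nat.cast_succ, add_comm] at hlen
    exact ENat.add_right_injective_of_ne_top ENat.one_ne_top hlen

theorem dim_ne_zero [IsArtinianRing A] [IsNoetherianRing A] (M : ModuleCat.{0} A)
    [Module.Finite A M] [Nontrivial M] : d M ≠ 0 := by
  obtain ⟨i, L, -, hdM⟩ := hd.exists_dim_eq_single_add M
  intro h0
  have hi := congrFun hdM i
  have : 0 ≤ d (ModuleCat.of A (M ⧸ L)) i := hd.dim_nonneg _ i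
  simp only [h0, Pi.zero_apply, Pi.add_apply, Pi.single_eq_same] at hi
  omega

end DimData

theorem prod_mem_of_iso_of_ext {G : ModuleCat.{0} A → Prop} (hfin : ∀ M, G M → Module.Finite A M)
    (hiso : ∀ M N : ModuleCat.{0} A, G M → (M ≃ₗ[A] N) → G N)
    (hext : ∀ M : ModuleCat.{0} A, Module.Finite A M → ∀ N : Submodule A M,
      G (ModuleCat.of A N) → G (ModuleCat.of A (M ⧸ N)) → G M)
    {M N : ModuleCat.{0} A} (hM : G M) (hN : G N) : G (ModuleCat.of A (M × N)) := by
  have := hfin M hM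
  have := hfin N hN
  refine hext (ModuleCat.of A (M × N)) Module.Finite.prod (LinearMap.range (LinearMap.inl A M N))
    (hiso M _ hM (LinearEquiv.ofInjective _ LinearMap.inl_injective)) (hiso N _ hN ?_)
  exact ((Submodule.quotEquivOfEq _ _ (LinearMap.range_inl A M N)).trans
    ((LinearMap.snd A M N).quotKerEquivOfSurjective Prod.snd_surjective)).symm

theorem IsTorsionClass.iso_mem {T : ModuleCat.{0} A → Prop} (hT : IsTorsionClass A T)
    {M N : ModuleCat.{0} A} (hM : T M) (e : M ≃ₗ[A] N) : T N :=
  have := hT.fin M hM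
  hT.quot M N hM (Module.Finite.equiv e) ⟨e, e.surjective⟩

theorem IsTorsionFreeClass.iso_mem {F : ModuleCat.{0} A → Prop} (hF : IsTorsionFreeClass A F)
    {M N : ModuleCat.{0} A} (hM : F M) (e : M ≃ₗ[A] N) : F N :=
  have := hF.fin M hM
  hF.sub M N hM (Module.Finite.equiv e) ⟨e.symm, e.symm.injective⟩

theorem IsTorsionClass.prod_mem {T : ModuleCat.{0} A → Prop} (hT : IsTorsionClass A T)
    {M N : ModuleCat.{0} A} (hM : T M) (hN : T N) : T (ModuleCat.of A (M × N)) :=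
  prod_mem_of_iso_of_ext hT.fin (fun _ _ => hT.iso_mem) hT.ext hM hN

theorem IsTorsionFreeClass.prod_mem {F : ModuleCat.{0} A → Prop} (hF : IsTorsionFreeClass A F)
    {M N : ModuleCat.{0} A} (hM : F M) (hN : F N) : F (ModuleCat.of A (M × N)) :=
  prod_mem_of_iso_of_ext hF.fin (fun _ _ => hF.iso_mem) hF.ext hM hN

theorem DimData.exists_mem_dim_eq_sum {n : ℕ} {S : Fin n → ModuleCat.{0} A}
    {d : ModuleCat.{0} A → Fin n → ℤ} (hd : DimData A n S d) {G : ModuleCat.{0} A → Prop}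
    (hfin : ∀ M, G M → Module.Finite A M) (hzero : G (ModuleCat.of A PUnit))
    (hprod : ∀ {M N : ModuleCat.{0} A}, G M → G N → G (ModuleCat.of A (M × N)))
    {ι : Type*} [Fintype ι] (M : ι → ModuleCat.{0} A) (hM : ∀ t, G (M t)) (k : ι → ℕ) :
    ∃ X, G X ∧ d X = ∑ t, k t • d (M t) := by
  let dims : AddSubmonoid (Fin n → ℤ) :=
    { carrier := {v | ∃ X, G X ∧ d X = v}
      zero_mem' := ⟨_, hzero, hd.dim_eq_zero _⟩
      add_mem' := by
        rintro _ _ ⟨X, hX, rfl⟩ ⟨Y, hY, rfl⟩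
        have := hfin X hX
        have := hfin Y hY
        exact ⟨_, hprod hX hY, hd.dim_prod X Y⟩ }
  exact dims.sum_mem fun t _ => dims.nsmul_mem ⟨M t, hM t, rfl⟩ (k t)

theorem coneGen_eq_hull (n : ℕ) (V : Set (Fin n → ℝ)) :
    coneGen n V = PointedCone.hull ℝ V := by
  ext x
  rw [SetLike.mem_coe, Submodule.mem_span_set']
  constructor
  · rintro ⟨m, c, v, hc, hv, rfl⟩
    exact ⟨m, fun i => ⟨c i, hc i⟩, fun i => ⟨v i, hv i⟩, by simp [Nonneg.mk_smul]⟩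
  · rintro ⟨m, c, v, rfl⟩
    exact ⟨m, fun i => c i, fun i => v i, fun i => (c i).2, fun i => (v i).2,
      by simp [Nonneg.coe_smul]⟩

theorem sub_inter_neg_eq_zero_iff_inter_eq_zero {E : Type*} [AddCommGroup E] [PartialOrder E]
    [IsOrderedAddMonoid E] (P Q : AddSubmonoid E) (hP : ∀ x ∈ P, 0 ≤ x) (hQ : ∀ y ∈ Q, 0 ≤ y) :
    {z | ∃ x ∈ P, ∃ y ∈ Q, z = x - y} ∩ -{z | ∃ x ∈ P, ∃ y ∈ Q, z = x - y} = {0} ↔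
      (P : Set E) ∩ Q = {0} := by
  constructor
  · refine fun h => Set.eq_singleton_iff_unique_mem.2 ⟨⟨P.zero_mem, Q.zero_mem⟩, ?_⟩
    rintro x ⟨hxP, hxQ⟩
    have hx : x ∈ ({0} : Set E) := h ▸ ⟨⟨x, hxP, 0, Q.zero_mem, (sub_zero x).symm⟩,
      ⟨0, P.zero_mem, x, hxQ, (zero_sub x).symm⟩⟩
    exact hx
  · refine fun h => Set.eq_singleton_iff_unique_mem.2
      ⟨⟨⟨0, P.zero_mem, 0, Q.zero_mem, (sub_zero 0).symm⟩,
        ⟨0, P.zero_mem, 0, Q.zero_mem, by simp⟩⟩, ?_⟩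
    rintro _ ⟨⟨x₁, hx₁, y₁, hy₁, rfl⟩, x₂, hx₂, y₂, hy₂, hneg⟩
    -- `x₁ + x₂ = y₁ + y₂` lies in both cones, and a zero sum of nonnegative terms has zero summands
    have hsum : x₁ + x₂ = y₁ + y₂ := by
      rw [neg_sub, sub_eq_sub_iff_add_eq_add] at hneg
      rw [hneg, add_comm]
    have h0 : x₁ + x₂ = 0 := h.subset ⟨P.add_mem hx₁ hx₂, hsum ▸ Q.add_mem hy₁ hy₂⟩
    rw [(add_eq_zero_iff_of_nonneg (hP _ hx₁) (hP _ hx₂)).1 h0 |>.1,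
      (add_eq_zero_iff_of_nonneg (hQ _ hy₁) (hQ _ hy₂)).1 (hsum ▸ h0) |>.1, sub_zero]

theorem cone_eq_hull (n : ℕ) (d : ModuleCat.{0} A → Fin n → ℤ) (C : ModuleCat.{0} A → Prop) :
    cone A n d C = PointedCone.hull ℝ (dimVecSet A n d C) :=
  coneGen_eq_hull n _

theorem dimVec_mem_cone {n : ℕ} (d : ModuleCat.{0} A → Fin n → ℤ) {C : ModuleCat.{0} A → Prop}
    {M : ModuleCat.{0} A} (hM : C M) : (fun i => (d M i : ℝ)) ∈ cone A n d C := by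
  rw [cone_eq_hull]
  exact PointedCone.subset_hull ⟨M, hM, rfl⟩

theorem nonzero_iff_nontrivial (M : ModuleCat.{0} A) : Nonzero A M ↔ Nontrivial M :=
  (nontrivial_iff_exists_ne 0).symm

section Artinian

variable [IsArtinianRing A] [IsNoetherianRing A] {n : ℕ} {S : Fin n → ModuleCat.{0} A}
  {d : ModuleCat.{0} A → Fin n → ℤ}

theorem DimData.nonzero_iff_dim_ne_zero (hd : DimData A n S d) (M : ModuleCat.{0} A)
    [Module.Finite A M] : Nonzero A M ↔ d M ≠ 0 := by
  rw [nonzero_iff_nontrivial]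
  refine ⟨fun _ => hd.dim_ne_zero M, fun h => ?_⟩
  by_contra hM
  have := not_nontrivial_iff_subsingleton.1 hM
  exact h (hd.dim_eq_zero M)

theorem DimData.cone_nonneg (hd : DimData A n S d) {C : ModuleCat.{0} A → Prop}
    (hC : ∀ M, C M → Module.Finite A M) : ∀ x ∈ cone A n d C, 0 ≤ x := by
  rw [cone_eq_hull]
  refine fun x hx => (PointedCone.mem_positive ℝ _).1 (Submodule.span_le.2 ?_ hx)
  rintro _ ⟨M, hM, rfl⟩
  have := hC M hM
  exact fun i => Int.cast_nonneg (hd.dim_nonneg M i)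

theorem DimData.exists_nonzero_dim_eq_of_mem_cone_inter (hd : DimData A n S d)
    {T F : ModuleCat.{0} A → Prop} (hT : IsTorsionClass A T) (hF : IsTorsionFreeClass A F)
    {x : Fin n → ℝ} (hxT : x ∈ cone A n d T) (hxF : x ∈ cone A n d F) (hx : x ≠ 0) :
    ∃ X Y : ModuleCat.{0} A, T X ∧ F Y ∧ Nonzero A X ∧ Nonzero A Y ∧ d X = d Y := by
  obtain ⟨m, c, v, hc, hv, rfl⟩ := hxT
  obtain ⟨m', c', v', hc', hv', hcv⟩ := hxF
  choose M hM hvM using hv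
  choose N hN hvN using hv'
  obtain rfl : v = fun i l => (d (M i) l : ℝ) := funext hvM
  obtain rfl : v' = fun j l => (d (N j) l : ℝ) := funext hvN
  obtain ⟨k, k', hkk', hk⟩ := exists_nat_sum_eq_of_real_sum_eq (fun i => d (M i))
    (fun j => d (N j)) c c' hc hc' hcv
  obtain ⟨X, hX, hdX⟩ :=
    hd.exists_mem_dim_eq_sum hT.fin (hT.zero _ fun _ => rfl) hT.prod_mem M hM k
  obtain ⟨Y, hY, hdY⟩ :=
    hd.exists_mem_dim_eq_sum hF.fin (hF.zero _ fun _ => rfl) hF.prod_mem N hN k'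
  have := hT.fin X hX
  have := hF.fin Y hY
  have hXY : d X = d Y := hdX.trans (hkk'.trans hdY.symm)
  -- if `d X = 0`, each summand `k i • d (M i)` vanishes, hence so does `c i • d (M i)`
  have hX0 : d X ≠ 0 := by
    rw [hdX]
    intro h0
    have hsummand := (Finset.sum_eq_zero_iff_of_nonneg fun i _ =>
      have := hT.fin _ (hM i); nsmul_nonneg (hd.dim_nonneg (M i)) (k i)).1 h0
    refine hx (Finset.sum_eq_zero fun i _ => ?_)
    rcases (hc i).eq_or_lt with hci | hci
    · rw [← hci, zero_smul]
    · rcases smul_eq_zero.1 (hsummand i (Finset.mem_univ i)) with hki | hdM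
      · exact absurd hki (hk i hci).ne'
      · funext l
        simp [hdM]
  refine ⟨X, Y, hX, hY, (hd.nonzero_iff_dim_ne_zero X).2 hX0,
    (hd.nonzero_iff_dim_ne_zero Y).2 (hXY ▸ hX0), hXY⟩

theorem DimData.cone_inter_eq_zero_iff (hd : DimData A n S d) {T F : ModuleCat.{0} A → Prop}
    (hT : IsTorsionClass A T) (hF : IsTorsionFreeClass A F) :
    cone A n d T ∩ cone A n d F = {0} ↔
      ¬ ∃ X Y : ModuleCat.{0} A, T X ∧ F Y ∧ Nonzero A X ∧ Nonzero A Y ∧ d X = d Y := by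
  constructor
  · rintro h ⟨X, Y, hX, hY, hX0, -, hXY⟩
    have := hT.fin X hX
    have hmem : (fun i => (d X i : ℝ)) ∈ cone A n d T ∩ cone A n d F :=
      ⟨dimVec_mem_cone d hX, hXY ▸ dimVec_mem_cone d hY⟩
    rw [h, Set.mem_singleton_iff] at hmem
    exact (hd.nonzero_iff_dim_ne_zero X).1 hX0 (funext fun i => by simpa using congrFun hmem i)
  · refine fun h => Set.eq_singleton_iff_unique_mem.2 ⟨?_, fun x hx => ?_⟩
    · simp only [cone_eq_hull]
      exact ⟨zero_mem _, zero_mem _⟩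
    · by_contra hx0
      exact h (hd.exists_nonzero_dim_eq_of_mem_cone_inter hT hF hx.1 hx.2 hx0)

theorem DimData.diffCone_inter_neg_eq_zero_iff (hd : DimData A n S d)
    {T F : ModuleCat.{0} A → Prop} (hT : ∀ M, T M → Module.Finite A M)
    (hF : ∀ M, F M → Module.Finite A M) :
    diffCone A n d T F ∩ (-(diffCone A n d T F)) = {0} ↔ cone A n d T ∩ cone A n d F = {0} := by
  have := sub_inter_neg_eq_zero_iff_inter_eq_zero
    (PointedCone.hull ℝ (dimVecSet A n d T)).toAddSubmonoid
    (PointedCone.hull ℝ (dimVecSet A n d F)).toAddSubmonoid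
    (by simpa [cone_eq_hull] using hd.cone_nonneg hT)
    (by simpa [cone_eq_hull] using hd.cone_nonneg hF)
  simpa [diffCone, cone_eq_hull] using this

end Artinian

/-- For a torsion class `𝒯` and a torsion-free class `ℱ`, the following
are equivalent: (a) `𝒯` and `ℱ` are numerically disjoint; (b) `cone 𝒯 ∩ cone ℱ = {0}`;
(c) the cone `C = cone 𝒯 - cone ℱ` is strongly convex, i.e. `C ∩ (-C) = {0}`. -/
theorem stmt7 (K : Type) [Field K] [Algebra K A] [FiniteDimensional K A]
    (n : ℕ) (S : Fin n → ModuleCat.{0} A) (d : ModuleCat.{0} A → (Fin n → ℤ))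
    (hd : DimData A n S d)
    (T F : ModuleCat.{0} A → Prop)
    (hT : IsTorsionClass A T) (hF : IsTorsionFreeClass A F) :
    List.TFAE [
      ¬ ∃ X Y : ModuleCat.{0} A, T X ∧ F Y ∧ Nonzero A X ∧ Nonzero A Y ∧ d X = d Y,
      cone A n d T ∩ cone A n d F = {0},
      diffCone A n d T F ∩ (-(diffCone A n d T F)) = {0}] := by
  have : IsArtinianRing A := IsArtinianRing.of_finite K A
  have : IsNoetherianRing A := isNoetherian_of_tower K inferInstance
  tfae_have 1 ↔ 2 := (hd.cone_inter_eq_zero_iff hT hF).symm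
  tfae_have 2 ↔ 3 := (hd.diffCone_inter_neg_eq_zero_iff hT.fin hF.fin).symm
  tfae_finish

end TorsPaper
end

section
/- Let K be an algebraically closed field, A a finite dimensional K-algebra, V a nonzero finite dimensional K-vector space, and Z an irreducible subset (in the Zariski topology) of the set of A-module structures on V. If 𝒯 is a bicompact torsion class in mod A, then at least one of the sets {ρ ∈ Z : V_ρ ∈ 𝒯} and {ρ ∈ Z : V_ρ ∈ 𝒯^⊥} is empty. -/
namespace TorsPaper


variable (K : Type) [Field K]

/-- The polynomial functions on a `K`-vector space `W`: the `K`-subalgebra of `W → K`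
generated by the linear forms. -/
def polyFuns (W : Type) [AddCommGroup W] [Module K W] : Subalgebra K (W → K) :=
  Algebra.adjoin K (Set.range fun l : W →ₗ[K] K => (l : W → K))

/-- The Zariski topology on a `K`-vector space `W`: closed sets are the common zero loci
of sets of polynomial functions. -/
def zariskiTop (W : Type) [AddCommGroup W] [Module K W] : TopologicalSpace W :=
  TopologicalSpace.generateFrom { U | ∃ f ∈ polyFuns K W, U = {x | f x ≠ 0} }

variable (A : Type) [Ring A] [Algebra K A]
variable (V : Type) [AddCommGroup V] [Module K V]

/-- The set of `A`-module structures on the `K`-vector space `V`, i.e. the `K`-algebra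
homomorphisms `A → End_K(V)`, as a subset of the affine space `Hom_K(A, End_K(V))`. -/
def RepSpace : Type :=
  { ρ : A →ₗ[K] (V →ₗ[K] V) // ρ 1 = LinearMap.id ∧
      ∀ a b : A, ρ (a * b) = (ρ a).comp (ρ b) }

/-- The (subspace) Zariski topology on the set of `A`-module structures on `V`. -/
def repTop : TopologicalSpace (RepSpace K A V) :=
  TopologicalSpace.induced Subtype.val (zariskiTop K (A →ₗ[K] (V →ₗ[K] V)))


/-- The module `V_ρ` determined by a module structure `ρ` on `V` belongs to the class
`C` (which is assumed closed under isomorphisms). -/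
def memRep (ρ : RepSpace K A V) (C : ModuleCat.{0} A → Prop) : Prop :=
  ∃ X : ModuleCat.{0} A, C X ∧ ∃ e : V ≃+ X, ∀ (a : A) (v : V), e (ρ.1 a v) = a • e v


open scoped Topology

section Zariski

variable {K} {W X Y : Type} [AddCommGroup W] [Module K W]
  [AddCommGroup X] [Module K X] [AddCommGroup Y] [Module K Y]

lemma isOpen_setOf_ne_zero {f : W → K} (hf : f ∈ polyFuns K W) :
    IsOpen[zariskiTop K W] {w | f w ≠ 0} :=
  TopologicalSpace.isOpen_generateFrom_of_mem ⟨f, hf, rfl⟩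

variable (K) in
def IsPolynomialMap (Φ : W → X) : Prop :=
  ∀ φ : X →ₗ[K] K, (fun w => φ (Φ w)) ∈ polyFuns K W

lemma isPolynomialMap_linearMap (L : W →ₗ[K] X) : IsPolynomialMap K L :=
  fun φ => Algebra.subset_adjoin ⟨φ ∘ₗ L, rfl⟩

lemma isPolynomialMap_const (c : X) : IsPolynomialMap K fun _ : W => c :=
  fun φ => Subalgebra.algebraMap_mem (polyFuns K W) (φ c)

lemma IsPolynomialMap.sub {Φ Ψ : W → X} (hΦ : IsPolynomialMap K Φ) (hΨ : IsPolynomialMap K Ψ) :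
    IsPolynomialMap K fun w => Φ w - Ψ w :=
  fun φ => by simp only [map_sub]; exact sub_mem (hΦ φ) (hΨ φ)

lemma IsPolynomialMap.map {Φ : W → X} (hΦ : IsPolynomialMap K Φ) (L : X →ₗ[K] Y) :
    IsPolynomialMap K fun w => L (Φ w) :=
  fun φ => hΦ (φ ∘ₗ L)

lemma IsPolynomialMap.det {E : Type} [AddCommGroup E] [Module K E] [FiniteDimensional K E]
    {Ψ : W → Module.End K E} (hΨ : IsPolynomialMap K Ψ) :
    (fun w => LinearMap.det (Ψ w)) ∈ polyFuns K W := by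
  let b := Module.finBasis K E
  let m : Matrix _ _ (polyFuns K W) := fun i j =>
    ⟨fun w => LinearMap.toMatrix b b (Ψ w) i j, by
      simpa [LinearMap.toMatrix_apply] using hΨ ((b.coord i) ∘ₗ LinearMap.applyₗ (b j))⟩
  convert m.det.2 using 1
  funext w
  rw [← LinearMap.det_toMatrix b]
  exact (RingHom.map_det ((Pi.evalRingHom _ w).comp (polyFuns K W).val.toRingHom) m).symm

lemma injective_iff_exists_det_comp_ne_zero [FiniteDimensional K X] (f : X →ₗ[K] Y) :
    Function.Injective f ↔ ∃ g : Y →ₗ[K] X, LinearMap.det (g ∘ₗ f) ≠ 0 := by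
  constructor
  · intro hf
    obtain ⟨g, hg⟩ := f.exists_leftInverse_of_injective (LinearMap.ker_eq_bot.mpr hf)
    exact ⟨g, by simp [hg]⟩
  · rintro ⟨g, hg⟩
    have hunit : IsUnit (g ∘ₗ f) :=
      (LinearMap.isUnit_iff_isUnit_det _).mpr (isUnit_iff_ne_zero.mpr hg)
    exact Function.Injective.of_comp (f := g) (Module.End.isUnit_iff _ |>.mp hunit).injective

lemma IsPolynomialMap.isOpen_setOf_injective [FiniteDimensional K X] {Φ : W → X →ₗ[K] Y}
    (hΦ : IsPolynomialMap K Φ) : IsOpen[zariskiTop K W] {w | Function.Injective (Φ w)} := by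
  simp_rw [injective_iff_exists_det_comp_ne_zero, Set.ofPred_exists]
  exact @isOpen_iUnion _ _ (zariskiTop K W) _ fun g =>
    isOpen_setOf_ne_zero ((hΦ.map (LinearMap.llcomp K X Y X g)).det)

end Zariski

section Intertwining

variable {K A} {X Y : Type} [AddCommGroup X] [Module K X] [AddCommGroup Y] [Module K Y]

variable (X Y) in
def precompAction : (A →ₗ[K] Module.End K X) →ₗ[K] (X →ₗ[K] Y) →ₗ[K] (A → X →ₗ[K] Y) :=
  LinearMap.mk₂ K (fun α f a => f ∘ₗ α a) (by intros; ext; simp) (by intros; ext; simp)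
    (by intros; ext; simp) (by intros; ext; simp)

variable (X Y) in
def postcompAction : (A →ₗ[K] Module.End K Y) →ₗ[K] (X →ₗ[K] Y) →ₗ[K] (A → X →ₗ[K] Y) :=
  LinearMap.mk₂ K (fun β f a => β a ∘ₗ f) (by intros; ext; simp) (by intros; ext; simp)
    (by intros; ext; simp) (by intros; ext; simp)

def intertwiningDefect (α : A →ₗ[K] Module.End K X) (β : A →ₗ[K] Module.End K Y) :
    (X →ₗ[K] Y) →ₗ[K] (A → X →ₗ[K] Y) :=
  precompAction X Y α - postcompAction X Y β

lemma intertwiningDefect_eq_zero_iff (α : A →ₗ[K] Module.End K X)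
    (β : A →ₗ[K] Module.End K Y) (f : X →ₗ[K] Y) :
    intertwiningDefect α β f = 0 ↔ ∀ a x, f (α a x) = β a (f x) := by
  simp [intertwiningDefect, precompAction, postcompAction, funext_iff, LinearMap.ext_iff,
    sub_eq_zero]

lemma isPolynomialMap_intertwiningDefect_left (β : A →ₗ[K] Module.End K Y) :
    IsPolynomialMap K fun α : A →ₗ[K] Module.End K X => intertwiningDefect α β :=
  (isPolynomialMap_linearMap _).sub (isPolynomialMap_const _)

lemma isPolynomialMap_intertwiningDefect_right (α : A →ₗ[K] Module.End K X) :
    IsPolynomialMap K fun β : A →ₗ[K] Module.End K Y => intertwiningDefect α β :=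
  (isPolynomialMap_const _).sub (isPolynomialMap_linearMap _)

variable (X Y) [Module A X] [IsScalarTower K A X] [Module A Y] [IsScalarTower K A Y]

lemma injective_intertwiningDefect_lsmul_iff :
    Function.Injective (intertwiningDefect (Algebra.lsmul K K (A := A) X).toLinearMap
      (Algebra.lsmul K K (A := A) Y).toLinearMap) ↔ ∀ f : X →ₗ[A] Y, f = 0 := by
  rw [injective_iff_map_eq_zero]
  constructor
  · intro h g
    have hg : g.restrictScalars K = 0 :=
      h _ ((intertwiningDefect_eq_zero_iff _ _ _).2 fun a x => g.map_smul a x)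
    exact LinearMap.ext fun x => LinearMap.congr_fun hg x
  · intro h f hf
    rw [intertwiningDefect_eq_zero_iff] at hf
    exact LinearMap.ext fun x => LinearMap.congr_fun (h { f with map_smul' := hf }) x

end Intertwining

namespace RepSpace

variable {K A V} (ρ : RepSpace K A V)

def toAlgHom : A →ₐ[K] Module.End K V :=
  AlgHom.ofLinearMap ρ.1 ρ.2.1 ρ.2.2

/-- The paper's `V_ρ`: a copy of `V` on which `A` acts through `ρ`. -/
def Mod (_ : RepSpace K A V) : Type := V

instance : AddCommGroup ρ.Mod := inferInstanceAs (AddCommGroup V)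

instance : Module K ρ.Mod := inferInstanceAs (Module K V)

instance : Module A ρ.Mod := Module.compHom V ρ.toAlgHom.toRingHom

instance : IsScalarTower K A ρ.Mod :=
  .of_algebraMap_smul fun k v => LinearMap.congr_fun (ρ.toAlgHom.commutes k) v

instance [FiniteDimensional K V] : Module.Finite K ρ.Mod := inferInstanceAs (Module.Finite K V)

instance [FiniteDimensional K V] : Module.Finite A ρ.Mod :=
  Module.Finite.of_restrictScalars_finite K A ρ.Mod


end RepSpace

section Openness

variable {K A V} [FiniteDimensional K A] [FiniteDimensional K V]
  (N : Type) [AddCommGroup N] [Module A N] [Module.Finite A N]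

lemma isOpen_setOf_forall_hom_from_eq_zero :
    IsOpen[repTop K A V] {ρ : RepSpace K A V | ∀ f : ρ.Mod →ₗ[A] N, f = 0} := by
  let : Module K N := Module.compHom N (algebraMap K A)
  have : IsScalarTower K A N := .of_algebraMap_smul fun _ _ => rfl
  have : Module.Finite K N := .trans A N
  have : {ρ : RepSpace K A V | ∀ f : ρ.Mod →ₗ[A] N, f = 0} = Subtype.val ⁻¹'
      {w | Function.Injective (intertwiningDefect w (Algebra.lsmul K K (A := A) N).toLinearMap)} :=
    Set.ext fun ρ => (injective_intertwiningDefect_lsmul_iff (K := K) (A := A) ρ.Mod N :).symm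
  rw [this]
  exact isOpen_induced (t := zariskiTop K _)
    (isPolynomialMap_intertwiningDefect_left _).isOpen_setOf_injective

lemma isOpen_setOf_forall_hom_to_eq_zero :
    IsOpen[repTop K A V] {ρ : RepSpace K A V | ∀ f : N →ₗ[A] ρ.Mod, f = 0} := by
  let : Module K N := Module.compHom N (algebraMap K A)
  have : IsScalarTower K A N := .of_algebraMap_smul fun _ _ => rfl
  have : Module.Finite K N := .trans A N
  have : {ρ : RepSpace K A V | ∀ f : N →ₗ[A] ρ.Mod, f = 0} = Subtype.val ⁻¹'
      {w | Function.Injective (intertwiningDefect (Algebra.lsmul K K (A := A) N).toLinearMap w)} :=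
    Set.ext fun ρ => (injective_intertwiningDefect_lsmul_iff (K := K) (A := A) N ρ.Mod :).symm
  rw [this]
  exact isOpen_induced (t := zariskiTop K _)
    (isPolynomialMap_intertwiningDefect_right _).isOpen_setOf_injective

end Openness

section TorsionTheory

variable {A}

def leftPerpObj (X : ModuleCat.{0} A) : ModuleCat.{0} A → Prop :=
  fun M => Module.Finite A M ∧ ∀ f : M →ₗ[A] X, f = 0

def rightPerpObj (X : ModuleCat.{0} A) : ModuleCat.{0} A → Prop :=
  fun Y => Module.Finite A Y ∧ ∀ f : X →ₗ[A] Y, f = 0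

lemma module_finite_of_forall_eq_zero (M : ModuleCat.{0} A) (h : ∀ x : M, x = 0) :
    Module.Finite A M :=
  have : Subsingleton M := ⟨fun x y => (h x).trans (h y).symm⟩
  inferInstance

lemma isTorsionClass_leftPerpObj (X : ModuleCat.{0} A) : IsTorsionClass A (leftPerpObj X) where
  fin _ h := h.1
  zero M h :=
    ⟨module_finite_of_forall_eq_zero M h, fun f => LinearMap.ext fun x => by simp [h x]⟩
  quot _ _ hM hfin := fun ⟨π, hπ⟩ =>
    ⟨hfin, fun f => (LinearMap.cancel_right hπ).1 <| by simpa using hM.2 (f ∘ₗ π)⟩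
  ext M hfin N hN hQ := by
    refine ⟨hfin, fun f => ?_⟩
    have hNf : N ≤ LinearMap.ker f := fun x hx =>
      LinearMap.congr_fun (hN.2 (f ∘ₗ N.subtype)) ⟨x, hx⟩
    ext x
    simpa using LinearMap.congr_fun (hQ.2 (N.liftQ f hNf)) (N.mkQ x)

lemma isTorsionFreeClass_rightPerpObj (X : ModuleCat.{0} A) :
    IsTorsionFreeClass A (rightPerpObj X) where
  fin _ h := h.1
  zero Y h := ⟨module_finite_of_forall_eq_zero Y h, fun _ => LinearMap.ext fun _ => h _⟩
  sub _ _ hY hfin := fun ⟨ι, hι⟩ =>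
    ⟨hfin, fun f => (LinearMap.cancel_left hι).1 <| by simpa using hY.2 (ι ∘ₗ f)⟩
  ext Y hfin N hN hQ := by
    refine ⟨hfin, fun f => ?_⟩
    have hfN : ∀ x, f x ∈ N := fun x => by
      simpa [Submodule.Quotient.mk_eq_zero] using LinearMap.congr_fun (hQ.2 (N.mkQ ∘ₗ f)) x
    ext x
    simpa using congrArg Subtype.val (LinearMap.congr_fun (hN.2 (f.codRestrict N hfN)) x)

lemma mem_torsClosure_self (M : ModuleCat.{0} A) : torsClosure A (fun X => X = M) M :=
  fun _ _ h => h M rfl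

lemma mem_torfClosure_self (N : ModuleCat.{0} A) : torfClosure A (fun X => X = N) N :=
  fun _ _ h => h N rfl

lemma eq_zero_of_forall_hom_eq_zero {M N : ModuleCat.{0} A} [Module.Finite A M]
    [Module.Finite A N]
    (hMN : rightPerp A (torsClosure A (fun X => X = M)) = torfClosure A (fun X => X = N))
    (X : ModuleCat.{0} A) [Module.Finite A X]
    (hMX : ∀ f : M →ₗ[A] X, f = 0) (hXN : ∀ f : X →ₗ[A] N, f = 0) (x : X) : x = 0 := by
  have hX : rightPerp A (torsClosure A (fun X => X = M)) X :=
    ⟨‹_›, fun Y hY => (hY _ (isTorsionClass_leftPerpObj X) fun _ h => h ▸ ⟨‹_›, hMX⟩).2⟩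
  rw [hMN] at hX
  exact LinearMap.congr_fun
    ((hX _ (isTorsionFreeClass_rightPerpObj X) fun _ h => h ▸ ⟨‹_›, hXN⟩).2 LinearMap.id) x

end TorsionTheory

section MemRep

variable {K A V} {ρ : RepSpace K A V} {C : ModuleCat.{0} A → Prop}

lemma memRep.exists_linearEquiv (h : memRep K A V ρ C) :
    ∃ X : ModuleCat.{0} A, C X ∧ Nonempty (ρ.Mod ≃ₗ[A] X) :=
  let ⟨X, hX, e, he⟩ := h
  ⟨X, hX, ⟨{ e with map_smul' := he }⟩⟩

lemma memRep.hom_eq_zero_of_mem_rightPerp (h : memRep K A V ρ C) {N : ModuleCat.{0} A}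
    (hN : rightPerp A C N) (f : ρ.Mod →ₗ[A] N) : f = 0 := by
  obtain ⟨X, hX, ⟨e⟩⟩ := h.exists_linearEquiv
  ext v
  simpa using LinearMap.congr_fun (hN.2 X hX (f ∘ₗ e.symm.toLinearMap)) (e v)

lemma hom_eq_zero_of_memRep_rightPerp (h : memRep K A V ρ (rightPerp A C))
    {M : ModuleCat.{0} A} (hM : C M) (f : M →ₗ[A] ρ.Mod) : f = 0 := by
  obtain ⟨X, hX, ⟨e⟩⟩ := h.exists_linearEquiv
  ext m
  simpa using LinearMap.congr_fun (hX.2 M hM (e.toLinearMap ∘ₗ f)) m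

end MemRep

theorem stmt12 [FiniteDimensional K A] [FiniteDimensional K V]
    (hV : ∃ v : V, v ≠ 0)
    (T : ModuleCat.{0} A → Prop)
    (hbc : IsBicompactTors A T)
    (Z : Set (RepSpace K A V)) (hZ : @IsIrreducible _ (repTop K A V) Z) :
    {ρ ∈ Z | memRep K A V ρ T} = ∅ ∨
      {ρ ∈ Z | memRep K A V ρ (rightPerp A T)} = ∅ := by
  obtain ⟨⟨M, hM, rfl⟩, N, hN, hMN⟩ := hbc
  have hNperp : rightPerp A _ N := hMN ▸ mem_torfClosure_self N
  by_contra! ⟨⟨ρ₁, hρ₁Z, hρ₁⟩, ρ₂, hρ₂Z, hρ₂⟩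
  obtain ⟨ρ, -, hρN, hρM⟩ := hZ.2 _ _
    (isOpen_setOf_forall_hom_from_eq_zero N) (isOpen_setOf_forall_hom_to_eq_zero M)
    ⟨ρ₁, hρ₁Z, hρ₁.hom_eq_zero_of_mem_rightPerp hNperp⟩
    ⟨ρ₂, hρ₂Z, hom_eq_zero_of_memRep_rightPerp hρ₂ (mem_torsClosure_self M)⟩
  obtain ⟨v, hv⟩ := hV
  exact hv (eq_zero_of_forall_hom_eq_zero hMN (ModuleCat.of A ρ.Mod) hρM hρN v)

end TorsPaper
end
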